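/- arXiv:2412.09760 — 6 statements merged into one kernel-verified Lean document; each statement's English description precedes it below -/
import Mathlib

section
/- Over all sequences R = (ρ_k)_{k=1}^r of integers in {1,...,r,r+1} with no repetitions except possibly r+1, the function S(R) = Σ_{k=1}^r (r − ρ_k + 1)/log₂(k+1) attains its unique maximum at the identity sequence ρ_k = k. -/
/-- The discounted sum `S(R) = Σ_{k=1}^r (r − ρ_k + 1)/log₂(k+1)`, where the
index `k : Fin r` represents position `k+1`. -/
noncomputable def discSum (r : ℕ) (ρ : Fin r → ℕ) : ℝ :=
  ∑ k : Fin r, ((r : ℝ) - ρ k + 1) / Real.logb 2 ((k : ℕ) + 2)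



open Finset

-- i-th smallest element of A is at least i
lemma le_orderEmb (A : Finset ℕ) (e : Fin A.card ↪o ℕ) : ∀ i : Fin A.card, (i : ℕ) ≤ e i := by
  intro i
  obtain ⟨n, hn⟩ := i
  induction n with
  | zero => exact Nat.zero_le _
  | succ j ih =>
    have h1 : j < A.card := Nat.lt_of_succ_lt hn
    have h2 : e ⟨j, h1⟩ < e ⟨j+1, hn⟩ := e.strictMono (by simp [Fin.mk_lt_mk])
    have h3 := ih h1
    simp only [Fin.val_mk] at h2 h3 ⊢
    omega

lemma sum_eq_emb (w : ℕ → ℝ) (A : Finset ℕ) :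
    ∑ k ∈ A, w k = ∑ i : Fin A.card, w (A.orderEmbOfFin rfl i) := by
  rw [← Finset.sum_image (f := w) (g := fun i : Fin A.card => A.orderEmbOfFin rfl i)
    (by intro x _ y _ h; exact (A.orderEmbOfFin rfl).injective h)]
  congr 1
  have : ↑(Finset.image (fun i : Fin A.card => A.orderEmbOfFin rfl i) Finset.univ)
      = (↑A : Set ℕ) := by
    rw [Finset.coe_image, Finset.coe_univ, Set.image_univ, Finset.range_orderEmbOfFin]
  exact (Finset.coe_injective this).symm

lemma sum_le_initial (w : ℕ → ℝ) (hw : StrictAnti w) (hpos : ∀ k, 0 < w k)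
    (A : Finset ℕ) (m : ℕ) (hcard : A.card ≤ m) :
    ∑ k ∈ A, w k ≤ ∑ k ∈ Finset.range m, w k := by
  rw [sum_eq_emb]
  calc ∑ i : Fin A.card, w (A.orderEmbOfFin rfl i)
      ≤ ∑ i : Fin A.card, w (i : ℕ) := by
        apply Finset.sum_le_sum
        intro i _
        exact hw.antitone (le_orderEmb A _ i)
    _ = ∑ k ∈ Finset.range A.card, w k := by
        rw [Fin.sum_univ_eq_sum_range]
    _ ≤ ∑ k ∈ Finset.range m, w k := by
        apply Finset.sum_le_sum_of_subset_of_nonneg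
        · exact Finset.range_subset_range.2 hcard
        · intro i _ _; exact (hpos i).le

lemma sum_lt_initial (w : ℕ → ℝ) (hw : StrictAnti w) (hpos : ∀ k, 0 < w k)
    (A : Finset ℕ) (m : ℕ) (hcard : A.card ≤ m) (hne : A ≠ Finset.range m) :
    ∑ k ∈ A, w k < ∑ k ∈ Finset.range m, w k := by
  rcases lt_or_eq_of_le hcard with hlt | heq
  · calc ∑ k ∈ A, w k ≤ ∑ k ∈ Finset.range A.card, w k := by
          simpa using sum_le_initial w hw hpos A A.card le_rfl
      _ < ∑ k ∈ Finset.range m, w k := by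
          apply Finset.sum_lt_sum_of_subset (Finset.range_subset_range.2 (le_of_lt hlt))
            (i := A.card) (by simp [hlt]) (by simp) (hpos _)
          intro j _ _; exact (hpos j).le
  · -- card A = m, A ≠ range m, so some element strictly bigger
    have hex : ∃ i : Fin A.card, (i : ℕ) < A.orderEmbOfFin rfl i := by
      by_contra h
      push_neg at h
      apply hne
      have hall : ∀ i : Fin A.card, (A.orderEmbOfFin rfl i : ℕ) = i := fun i =>
        le_antisymm (h i) (le_orderEmb A _ i)
      ext n
      rw [Finset.mem_range, ← heq]
      constructor
      · intro hn
        have : n ∈ Set.range (A.orderEmbOfFin rfl) := by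
          rw [Finset.range_orderEmbOfFin]; exact hn
        obtain ⟨i, hi⟩ := this
        rw [← hi, hall]; exact i.2
      · intro hn
        have := A.orderEmbOfFin_mem rfl ⟨n, hn⟩
        rwa [hall ⟨n, hn⟩] at this
    rw [sum_eq_emb, ← heq, ← Fin.sum_univ_eq_sum_range]
    obtain ⟨i, hi⟩ := hex
    apply Finset.sum_lt_sum
    · intro j _; exact hw.antitone (le_orderEmb A _ j)
    · exact ⟨i, Finset.mem_univ i, hw hi⟩

-- the weight function
noncomputable def wfun (n : ℕ) : ℝ := 1 / Real.logb 2 ((n : ℝ) + 2)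

lemma wfun_pos (n : ℕ) : 0 < wfun n := by
  apply one_div_pos.2
  apply Real.logb_pos (by norm_num)
  have : (0:ℝ) ≤ (n:ℝ) := Nat.cast_nonneg n
  linarith

lemma wfun_anti : StrictAnti wfun := by
  intro a b hab
  apply one_div_lt_one_div_of_lt
  · apply Real.logb_pos (by norm_num)
    have : (0:ℝ) ≤ (a:ℝ) := Nat.cast_nonneg a
    linarith
  · apply Real.logb_lt_logb (by norm_num)
    · have : (0:ℝ) ≤ (a:ℝ) := Nat.cast_nonneg a
      linarith
    · have : (a:ℝ) < b := by exact_mod_cast hab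
      linarith

lemma expand (r : ℕ) (w : ℕ → ℝ) (b : Fin r → ℕ) (hb : ∀ k, b k ≤ r) :
    ∑ k : Fin r, (b k : ℝ) * w (k : ℕ) =
      ∑ t ∈ Finset.Icc 1 r, ∑ k ∈ Finset.univ.filter (fun k : Fin r => t ≤ b k), w (k : ℕ) := by
  have : ∀ t, ∑ k ∈ Finset.univ.filter (fun k : Fin r => t ≤ b k), w (k : ℕ)
      = ∑ k : Fin r, if t ≤ b k then w (k : ℕ) else 0 := fun t => Finset.sum_filter _ _
  simp only [this]
  rw [Finset.sum_comm]
  refine Finset.sum_congr rfl fun k _ => ?_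
  have hfe : (Finset.Icc 1 r).filter (fun t => t ≤ b k) = Finset.Icc 1 (b k) := by
    ext t
    simp only [Finset.mem_filter, Finset.mem_Icc]
    have := hb k
    omega
  rw [← Finset.sum_filter, hfe, Finset.sum_const, Nat.card_Icc, nsmul_eq_mul]
  norm_num


lemma discSum_eq (r : ℕ) (ρ : Fin r → ℕ) (hρ : ∀ k, 1 ≤ ρ k ∧ ρ k ≤ r + 1) :
    discSum r ρ = ∑ k : Fin r, ((r + 1 - ρ k : ℕ) : ℝ) * wfun (k : ℕ) := by
  refine Finset.sum_congr rfl fun k _ => ?_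
  have h1 := (hρ k).1
  have h2 := (hρ k).2
  rw [Nat.cast_sub h2, wfun]
  push_cast
  ring


/-- Over all sequences `ρ : {1,…,r} → {1,…,r+1}` with no repeated values except
possibly `r+1`, the function `S` attains its unique maximum at the identity
sequence `ρ_k = k`. -/
theorem discSum_unique_max (r : ℕ) (hr : 1 ≤ r) (ρ : Fin r → ℕ)
    (hrange : ∀ k, 1 ≤ ρ k ∧ ρ k ≤ r + 1)
    (hinj : ∀ k k', ρ k ≤ r → ρ k = ρ k' → k = k')
    (hne : ρ ≠ fun (k : Fin r) => (k : ℕ) + 1) :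
    discSum r ρ < discSum r (fun k => (k : ℕ) + 1) := by
  set b : Fin r → ℕ := fun k => r + 1 - ρ k with hbdef
  have hb : ∀ k, b k ≤ r := fun k => by have := (hrange k).1; simp [hbdef]; omega
  set c : Fin r → ℕ := fun k => r - (k : ℕ) with hcdef
  have hc : ∀ k, c k ≤ r := fun k => by simp only [hcdef]; omega
  have hid : ∀ k : Fin r, 1 ≤ (k:ℕ)+1 ∧ (k:ℕ)+1 ≤ r + 1 := fun k => ⟨by omega, by have := k.2; omega⟩
  rw [discSum_eq r ρ hrange, discSum_eq r _ hid]
  have hcb : ∀ k : Fin r, r + 1 - ((k:ℕ)+1) = c k := fun k => by simp [hcdef]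
  simp only [hcb]
  rw [expand r wfun b hb, expand r wfun c hc]
  -- inner sums as sums over images in ℕ
  have himg : ∀ (d : Fin r → ℕ) (t : ℕ),
      ∑ k ∈ Finset.univ.filter (fun k : Fin r => t ≤ d k), wfun (k : ℕ)
        = ∑ n ∈ (Finset.univ.filter (fun k : Fin r => t ≤ d k)).image Fin.val, wfun n := by
    intro d t
    rw [Finset.sum_image (fun x _ y _ h => Fin.val_injective h)]
  -- identity's set is the initial segment
  have hidseg : ∀ t, 1 ≤ t → t ≤ r →
      (Finset.univ.filter (fun k : Fin r => t ≤ c k)).image Fin.val = Finset.range (r + 1 - t) := by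
    intro t ht1 ht2
    ext n
    simp only [Finset.mem_image, Finset.mem_filter, Finset.mem_univ, true_and, Finset.mem_range]
    constructor
    · rintro ⟨k, hk, rfl⟩
      have := k.2
      simp only [hcdef] at hk
      omega
    · intro hn
      have hn' : n < r := by omega
      refine ⟨⟨n, hn'⟩, ?_, rfl⟩
      simp only [hcdef]
      omega
  -- cardinality bound for ρ's sets
  have hcard : ∀ t, 1 ≤ t → t ≤ r →
      ((Finset.univ.filter (fun k : Fin r => t ≤ b k)).image Fin.val).card ≤ r + 1 - t := by
    intro t ht1 ht2
    rw [Finset.card_image_of_injective _ Fin.val_injective]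
    have : ((Finset.univ.filter (fun k : Fin r => t ≤ b k))).card ≤ (Finset.Icc 1 (r + 1 - t)).card := by
      apply Finset.card_le_card_of_injOn ρ
      · intro k hk
        simp only [Finset.mem_coe, Finset.mem_filter, Finset.mem_univ, true_and, hbdef] at hk
        have h1 := (hrange k).1
        have h2 := (hrange k).2
        simp only [Finset.mem_coe, Finset.mem_Icc]
        omega
      · intro k hk k' hk' heq
        simp only [Finset.mem_coe, Finset.mem_filter, Finset.mem_univ, true_and, hbdef] at hk
        have h2 := (hrange k).2
        exact hinj k k' (by omega) heq
    rwa [Nat.card_Icc, Nat.add_sub_cancel] at this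
  -- weak inequality for every t
  have hweak : ∀ t ∈ Finset.Icc 1 r,
      ∑ k ∈ Finset.univ.filter (fun k : Fin r => t ≤ b k), wfun (k : ℕ)
        ≤ ∑ k ∈ Finset.univ.filter (fun k : Fin r => t ≤ c k), wfun (k : ℕ) := by
    intro t ht
    rw [Finset.mem_Icc] at ht
    rw [himg b t, himg c t, hidseg t ht.1 ht.2]
    exact sum_le_initial wfun wfun_anti wfun_pos _ _ (hcard t ht.1 ht.2)
  -- a strict inequality somewhere
  have hstrict : ∃ t ∈ Finset.Icc 1 r,
      ∑ k ∈ Finset.univ.filter (fun k : Fin r => t ≤ b k), wfun (k : ℕ)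
        < ∑ k ∈ Finset.univ.filter (fun k : Fin r => t ≤ c k), wfun (k : ℕ) := by
    have hex : ∃ t, 1 ≤ t ∧ t ≤ r ∧
        (Finset.univ.filter (fun k : Fin r => t ≤ b k)).image Fin.val ≠ Finset.range (r + 1 - t) := by
      by_contra h
      push_neg at h
      apply hne
      funext k
      have h1 : ∀ t, 1 ≤ t → t ≤ r → (t ≤ b k ↔ (k : ℕ) < r + 1 - t) := by
        intro t ht1 ht2
        have := h t ht1 ht2
        constructor
        · intro htb
          have hmem : (k : ℕ) ∈ (Finset.univ.filter (fun k : Fin r => t ≤ b k)).image Fin.val := by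
            exact Finset.mem_image.2 ⟨k, Finset.mem_filter.2 ⟨Finset.mem_univ k, htb⟩, rfl⟩
          rw [this, Finset.mem_range] at hmem
          exact hmem
        · intro hlt
          have hmem : (k : ℕ) ∈ Finset.range (r + 1 - t) := Finset.mem_range.2 hlt
          rw [← this] at hmem
          obtain ⟨k', hk', hkv⟩ := Finset.mem_image.1 hmem
          have : k' = k := Fin.val_injective hkv
          subst this
          exact (Finset.mem_filter.1 hk').2
      have hρ1 := (hrange k).1
      have hρ2 := (hrange k).2
      have hkr := k.2
      have e1 : b k ≤ r - (k : ℕ) := by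
        rcases Nat.eq_zero_or_pos (b k) with h0 | h0
        · omega
        · have := (h1 (b k) h0 (hb k)).1 le_rfl
          omega
      have e2 : r - (k : ℕ) ≤ b k := by
        rcases Nat.eq_zero_or_pos (r - (k : ℕ)) with h0 | h0
        · omega
        · exact (h1 (r - (k : ℕ)) h0 (by omega)).2 (by omega)
      simp only [hbdef] at e1 e2
      omega
    obtain ⟨t, ht1, ht2, htne⟩ := hex
    refine ⟨t, Finset.mem_Icc.2 ⟨ht1, ht2⟩, ?_⟩
    rw [himg b t, himg c t, hidseg t ht1 ht2]
    exact sum_lt_initial wfun wfun_anti wfun_pos _ _ (hcard t ht1 ht2) htne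
  obtain ⟨t₀, ht₀, hlt₀⟩ := hstrict
  exact Finset.sum_lt_sum hweak ⟨t₀, ht₀, hlt₀⟩
end

section
/- There exist two language models M₁, M₂ over a one-letter alphabet that are pointwise (vd, 0.15)-similar, yet the induced tolerance relations on Σ* differ: in the relation induced by M₂ all strings are pairwise related, while for M₁ there is an infinite set of strings that are pairwise unrelated. -/
/-- A probability distribution over `Option α` (the alphabet `α` extended with
the terminal symbol `$`, modeled as `none`). -/
def PDist (α : Type*) [Fintype α] : Type _ :=
  {f : Option α → ℝ // (∀ x, 0 ≤ f x) ∧ ∑ x, f x = 1}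

/-- A probabilistic deterministic finite automaton with state space `Q`. -/
structure PDFA (Q : Type*) (α : Type*) [Fintype α] where
  init : Q
  out : Q → PDist α
  next : Q → α → Q

variable {Q α : Type*} [Fintype α]

/-- Extension of the transition function to strings. -/
def PDFA.run (A : PDFA Q α) (q : Q) (u : List α) : Q := u.foldl A.next q

/-- The language model defined by a PDFA. -/
def PDFA.lm (A : PDFA Q α) (u : List α) : PDist α := A.out (A.run A.init u)

/-- The tolerance/congruence induced on strings by a language model `M` and a
relation `S` on distributions. -/
def strTol (M : List α → PDist α) (S : PDist α → PDist α → Prop) (u u' : List α) : Prop :=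
  ∀ w : List α, S (M (u ++ w)) (M (u' ++ w))

/-- The tolerance/congruence induced on states of a PDFA. -/
def stateTol (A : PDFA Q α) (S : PDist α → PDist α → Prop) (q q' : Q) : Prop :=
  ∀ w : List α, S (A.out (A.run q w)) (A.out (A.run q' w))

/-- Variation-distance similarity with threshold `t`:
`max_σ |δ(σ) − δ'(σ)| ≤ t`. -/
def vdSim {α : Type*} [Fintype α] (t : ℝ) (δ δ' : PDist α) : Prop :=
  ∀ x : Option α, |δ.1 x - δ'.1 x| ≤ t

/-- An explicit distribution on `Option Unit` with `none ↦ p`, `some ↦ 1-p`. -/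
noncomputable def pd (p : ℝ) (h0 : 0 ≤ p) (h1 : p ≤ 1) : PDist Unit :=
  ⟨fun x => Option.rec p (fun _ => 1 - p) x, by
    constructor
    · intro x; cases x <;> simp <;> linarith
    · simp [Fintype.sum_option]⟩

open Classical in
/-- The model `M₁`. -/
noncomputable def Mone : List Unit → PDist Unit := fun u =>
  if (∃ k : ℕ, u.length = 2 ^ k) then pd 0.6 (by norm_num) (by norm_num)
  else pd 0.4 (by norm_num) (by norm_num)

/-- `2^j + 2^k` is never a power of two when `j < k`. -/
lemma pow_add_pow_ne (j k m : ℕ) (h : j < k) : 2 ^ j + 2 ^ k ≠ 2 ^ m := by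
  intro he
  have h1 : 2 ^ k < 2 ^ m := by
    have : 0 < 2 ^ j := Nat.pow_pos (show 0 < 2 by norm_num)
    omega
  have hm : k < m := (Nat.pow_lt_pow_iff_right (by norm_num)).1 h1
  have h2 : 2 ^ (k + 1) ≤ 2 ^ m := Nat.pow_le_pow_right (by norm_num) hm
  have h3 : 2 ^ j < 2 ^ k := Nat.pow_lt_pow_right (by norm_num) h
  have : 2 ^ (k + 1) = 2 ^ k + 2 ^ k := by ring
  omega

lemma Mone_mem {u : List Unit} (h : ∃ k : ℕ, u.length = 2 ^ k) :
    Mone u = pd 0.6 (by norm_num) (by norm_num) := by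
  simp [Mone, h]

lemma Mone_not_mem {u : List Unit} (h : ¬ ∃ k : ℕ, u.length = 2 ^ k) :
    Mone u = pd 0.4 (by norm_num) (by norm_num) := by
  simp only [Mone, if_neg h]

lemma not_tol_of_lt {j k : ℕ} (h : j < k) :
    ¬ strTol Mone (vdSim 0.15)
      (List.replicate (2 ^ j) ()) (List.replicate (2 ^ k) ()) := by
  intro hT
  have hw := hT (List.replicate (2 ^ k) ()) none
  have hlen1 : (List.replicate (2 ^ j) () ++ List.replicate (2 ^ k) ()).length
      = 2 ^ j + 2 ^ k := by simp
  have hlen2 : (List.replicate (2 ^ k) () ++ List.replicate (2 ^ k) ()).length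
      = 2 ^ (k + 1) := by simp; ring
  have h1 : Mone (List.replicate (2 ^ j) () ++ List.replicate (2 ^ k) ())
      = pd 0.4 (by norm_num) (by norm_num) := by
    apply Mone_not_mem
    rw [hlen1]
    rintro ⟨m, hm⟩
    exact pow_add_pow_ne j k m h hm
  have h2 : Mone (List.replicate (2 ^ k) () ++ List.replicate (2 ^ k) ())
      = pd 0.6 (by norm_num) (by norm_num) := by
    apply Mone_mem
    exact ⟨k + 1, hlen2⟩
  rw [h1, h2] at hw
  norm_num [pd, abs_le] at hw

/-- There exist two language models over a one-letter alphabet that are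
pointwise `(vd, 0.15)`-similar, yet in the tolerance induced by `M₂` all
strings are pairwise related while for `M₁` there is an infinite set of
pairwise unrelated strings. -/
theorem exists_pointwise_similar_models_with_different_tolerances :
    ∃ M₁ M₂ : List Unit → PDist Unit,
      (∀ u, vdSim 0.15 (M₁ u) (M₂ u)) ∧
      (∀ u u', strTol M₂ (vdSim 0.15) u u') ∧
      ∃ T : Set (List Unit), T.Infinite ∧
        T.Pairwise fun u u' => ¬ strTol M₁ (vdSim 0.15) u u' := by
  refine ⟨Mone, fun _ => pd 0.5 (by norm_num) (by norm_num), ?_, ?_, ?_⟩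
  · intro u x
    by_cases h : ∃ k : ℕ, u.length = 2 ^ k
    · rw [Mone_mem h]; cases x <;> norm_num [pd, abs_le]
    · rw [Mone_not_mem h]; cases x <;> norm_num [pd, abs_le]
  · intro u u' w x
    norm_num
  · refine ⟨Set.range (fun k : ℕ => List.replicate (2 ^ k) ()), ?_, ?_⟩
    · apply Set.infinite_range_of_injective
      intro a b hab
      have : (2 : ℕ) ^ a = 2 ^ b := by
        have := congrArg List.length hab
        simpa using this
      exact Nat.pow_right_injective (by norm_num) this
    · rintro _ ⟨j, rfl⟩ _ ⟨k, rfl⟩ hne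
      have hjk : j ≠ k := by rintro rfl; exact hne rfl
      rcases lt_or_gt_of_ne hjk with h | h
      · exact not_tol_of_lt h
      · intro hT
        exact not_tol_of_lt h (fun w x => by
          have := hT w x
          rwa [abs_sub_comm] at this)
end

section
/- For a PDFA A in which every state is reachable, the map sending the ≡^{M_A}_E-class of a string u to the ≡^A_E-class of the state τ*(u) is a well-defined bijection; moreover it commutes with the symbol-append operations, maps the class of the empty string to the class of the initial state, and carries the induced class-valued output maps onto each other (i.e., it is an isomorphism of quotient structures). -/
variable {Q α : Type*} [Fintype α]

/-!
Running `A` from its initial state turns the string congruence into the state congruence: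
`M_A(uw) = π(τ*(τ*(u), w))`, so `u ≡^{M_A}_E u'` says exactly that `τ*(u) ≡^A_E τ*(u')`.
Hence `u ↦ τ*(u)` descends to the quotients and is injective there; it is onto because every
state is reachable. Appending a symbol and reading off the output commute with `τ*` already
before taking classes.
-/

open Function

theorem Quot.map_bijective_of_rel_iff {α β : Type*} {r : α → α → Prop} {s : β → β → Prop}
    (hs : Equivalence s) {f : α → β} (hf : Surjective f) (hrs : ∀ a b, r a b ↔ s (f a) (f b)) :
    Bijective (Quot.map f fun a b => (hrs a b).1) := by
  refine ⟨fun x y hxy => ?_, Quot.map_surjective _ hf⟩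
  induction x using Quot.ind with | _ a => ?_
  induction y using Quot.ind with | _ b => ?_
  have hab : s (f a) (f b) := hs.eqvGen_iff.mp (Quot.eqvGen_exact hxy)
  exact Quot.sound ((hrs a b).2 hab)

theorem strTol.rel_nil {M : List α → PDist α} {S : PDist α → PDist α → Prop} {u u' : List α}
    (h : strTol M S u u') : S (M u) (M u') := by
  simpa using h []

theorem stateTol.rel_out {A : PDFA Q α} {S : PDist α → PDist α → Prop} {q q' : Q}
    (h : stateTol A S q q') : S (A.out q) (A.out q') :=
  h []

namespace PDFA

variable (A : PDFA Q α)

theorem run_append (q : Q) (u w : List α) : A.run q (u ++ w) = A.run (A.run q u) w :=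
  List.foldl_append

theorem run_concat (q : Q) (u : List α) (a : α) : A.run q (u ++ [a]) = A.next (A.run q u) a :=
  A.run_append q u [a]

theorem stateTol_equivalence {S : PDist α → PDist α → Prop} (hS : Equivalence S) :
    Equivalence (stateTol A S) :=
  ⟨fun _ _ => hS.refl _, fun h w => hS.symm (h w), fun h h' w => hS.trans (h w) (h' w)⟩

theorem strTol_lm_iff_stateTol (S : PDist α → PDist α → Prop) (u u' : List α) :
    strTol A.lm S u u' ↔ stateTol A S (A.run A.init u) (A.run A.init u') := by
  simp only [strTol, stateTol, lm, run_append]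

def quotRun (S : PDist α → PDist α → Prop) : Quot (strTol A.lm S) → Quot (stateTol A S) :=
  Quot.map (A.run A.init) fun u u' => (A.strTol_lm_iff_stateTol S u u').1

theorem quotRun_bijective {S : PDist α → PDist α → Prop} (hS : Equivalence S)
    (hreach : Surjective (A.run A.init)) : Bijective (A.quotRun S) :=
  Quot.map_bijective_of_rel_iff (A.stateTol_equivalence hS) hreach (A.strTol_lm_iff_stateTol S)

end PDFA

theorem quotient_isomorphism_general {Q α : Type*} [Fintype α] (A : PDFA Q α)
    (E : PDist α → PDist α → Prop) (hE : Equivalence E)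
    (hreach : ∀ q : Q, ∃ u : List α, A.run A.init u = q) :
    ∃ β : Quot (strTol A.lm E) → Quot (stateTol A E),
      Function.Bijective β ∧
      (∀ u, β (Quot.mk _ u) = Quot.mk _ (A.run A.init u)) ∧
      (∀ u (a : α), β (Quot.mk _ (u ++ [a])) = Quot.mk _ (A.next (A.run A.init u) a)) ∧
      β (Quot.mk _ []) = Quot.mk _ A.init ∧
      ∃ (πs : Quot (strTol A.lm E) → Quot E) (πq : Quot (stateTol A E) → Quot E),
        (∀ u, πs (Quot.mk _ u) = Quot.mk _ (A.lm u)) ∧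
        (∀ q, πq (Quot.mk _ q) = Quot.mk _ (A.out q)) ∧
        (∀ x, πq (β x) = πs x) := by
  refine ⟨A.quotRun E, A.quotRun_bijective hE hreach, fun _ => rfl,
    fun u a => congrArg _ (A.run_concat A.init u a), rfl, ?_⟩
  refine ⟨Quot.map A.lm fun _ _ => strTol.rel_nil, Quot.map A.out fun _ _ => stateTol.rel_out,
    fun _ => rfl, fun _ => rfl, ?_⟩
  rintro ⟨u⟩
  rfl

/-- Prop. 12 (paper): for a PDFA with all states reachable, the map sending the
`≡^{M_A}_E`-class of a string `u` to the `≡^A_E`-class of `τ*(u)` is a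
well-defined bijection which commutes with appending symbols, maps the class of
the empty string to the class of the initial state, and carries the induced
class-valued output maps onto each other. -/
theorem quotient_isomorphism {Q α : Type*} [Fintype α] [Fintype Q] (A : PDFA Q α)
    (E : PDist α → PDist α → Prop) (hE : Equivalence E)
    (hreach : ∀ q : Q, ∃ u : List α, A.run A.init u = q) :
    ∃ β : Quot (strTol A.lm E) → Quot (stateTol A E),
      Function.Bijective β ∧
      (∀ u, β (Quot.mk _ u) = Quot.mk _ (A.run A.init u)) ∧
      (∀ u (a : α), β (Quot.mk _ (u ++ [a])) = Quot.mk _ (A.next (A.run A.init u) a)) ∧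
      β (Quot.mk _ []) = Quot.mk _ A.init ∧
      ∃ (πs : Quot (strTol A.lm E) → Quot E) (πq : Quot (stateTol A E) → Quot E),
        (∀ u, πs (Quot.mk _ u) = Quot.mk _ (A.lm u)) ∧
        (∀ q, πq (Quot.mk _ q) = Quot.mk _ (A.out q)) ∧
        (∀ x, πq (β x) = πs x) :=
  quotient_isomorphism_general A E hE hreach
end

section
/- If two PDFAs A and B (with all states reachable) define E-equivalent language models (M_A(u) =_E M_B(u) for all u), then their quotient PDFAs modulo the state congruence ≡_E are isomorphic; in particular they have the same number of states. -/
variable {Q α : Type*} [Fintype α]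

theorem PDFA.run_append_s10 (A : PDFA Q α) (q : Q) (u v : List α) :
    A.run q (u ++ v) = A.run (A.run q u) v := List.foldl_append

section Aux
variable {QA QB : Type*} (A : PDFA QA α) (B : PDFA QB α)
  (E : PDist α → PDist α → Prop)

/-- cross relation between states of A and B -/
def cross (q : QA) (p : QB) : Prop :=
  ∀ w : List α, E (A.out (A.run q w)) (B.out (B.run p w))

variable {A B E}

theorem cross_run (hE : Equivalence E) (heq : ∀ u, E (A.lm u) (B.lm u)) (u : List α) :
    cross A B E (A.run A.init u) (B.run B.init u) := by
  intro w
  have := heq (u ++ w)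
  simpa [PDFA.lm, PDFA.run_append_s10] using this

theorem stateTolB_of_cross (hE : Equivalence E) {q q' : QA} {p p' : QB}
    (h1 : cross A B E q p) (h2 : cross A B E q' p')
    (h : stateTol A E q q') : stateTol B E p p' := fun w =>
  hE.trans (hE.trans (hE.symm (h1 w)) (h w)) (h2 w)

theorem stateTolA_of_cross (hE : Equivalence E) {q q' : QA} {p p' : QB}
    (h1 : cross A B E q p) (h2 : cross A B E q' p')
    (h : stateTol B E p p') : stateTol A E q q' := fun w =>
  hE.trans (hE.trans (h1 w) (h w)) (hE.symm (h2 w))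

variable (hE : Equivalence E) (hreachA : ∀ q : QA, ∃ u : List α, A.run A.init u = q)
  (heq : ∀ u, E (A.lm u) (B.lm u))

/-- the map between quotients -/
noncomputable def beta : Quot (stateTol A E) → Quot (stateTol B E) :=
  Quot.lift (fun q => Quot.mk _ (B.run B.init (hreachA q).choose))
    (by
      intro q q' h
      apply Quot.sound
      refine stateTolB_of_cross hE ?_ ?_ h
      · have := cross_run hE heq (hreachA q).choose
        rwa [(hreachA q).choose_spec] at this
      · have := cross_run hE heq (hreachA q').choose
        rwa [(hreachA q').choose_spec] at this)

theorem beta_run (u : List α) :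
    beta hE hreachA heq (Quot.mk _ (A.run A.init u)) = Quot.mk _ (B.run B.init u) := by
  apply Quot.sound
  refine stateTolB_of_cross hE ?_ (cross_run hE heq u)
      (fun w => hE.refl _)
  have := cross_run hE heq (hreachA (A.run A.init u)).choose
  rwa [(hreachA (A.run A.init u)).choose_spec] at this

end Aux

/-- Cor. 13 (paper): if two PDFAs (with all states reachable) define
`E`-equivalent language models, then their quotient PDFAs modulo the state
congruence are isomorphic; in particular they have the same number of states. -/
theorem quotients_isomorphic_of_equiv_lm {QA QB α : Type*} [Fintype α]
    [Fintype QA] [Fintype QB] (A : PDFA QA α) (B : PDFA QB α)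
    (E : PDist α → PDist α → Prop) (hE : Equivalence E)
    (hreachA : ∀ q : QA, ∃ u : List α, A.run A.init u = q)
    (hreachB : ∀ q : QB, ∃ u : List α, B.run B.init u = q)
    (heq : ∀ u, E (A.lm u) (B.lm u)) :
    ∃ β : Quot (stateTol A E) → Quot (stateTol B E),
      Function.Bijective β ∧
      β (Quot.mk _ A.init) = Quot.mk _ B.init ∧
      (∃ (tA : Quot (stateTol A E) → α → Quot (stateTol A E))
         (tB : Quot (stateTol B E) → α → Quot (stateTol B E)),
        (∀ q a, tA (Quot.mk _ q) a = Quot.mk _ (A.next q a)) ∧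
        (∀ q a, tB (Quot.mk _ q) a = Quot.mk _ (B.next q a)) ∧
        (∀ x a, β (tA x a) = tB (β x) a)) ∧
      (∃ (pA : Quot (stateTol A E) → Quot E) (pB : Quot (stateTol B E) → Quot E),
        (∀ q, pA (Quot.mk _ q) = Quot.mk _ (A.out q)) ∧
        (∀ q, pB (Quot.mk _ q) = Quot.mk _ (B.out q)) ∧
        (∀ x, pB (β x) = pA x)) ∧
      Nat.card (Quot (stateTol A E)) = Nat.card (Quot (stateTol B E)) := by
  classical
  have hBeq : Equivalence (stateTol B E) :=
    ⟨fun q w => hE.refl _, fun h w => hE.symm (h w),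
     fun h1 h2 w => hE.trans (h1 w) (h2 w)⟩
  refine ⟨beta hE hreachA heq, ⟨?_, ?_⟩, ?_, ?_, ?_, ?_⟩
  · -- injective
    intro x y hxy
    induction x using Quot.ind with | _ q =>
    induction y using Quot.ind with | _ q' =>
    obtain ⟨u, hu⟩ := hreachA q
    obtain ⟨u', hu'⟩ := hreachA q'
    rw [← hu, ← hu', beta_run hE hreachA heq u, beta_run hE hreachA heq u'] at hxy
    rw [Quot.eq] at hxy
    have hB : stateTol B E (B.run B.init u) (B.run B.init u') :=
      (Equivalence.eqvGen_iff hBeq).mp hxy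
    apply Quot.sound
    rw [← hu, ← hu']
    exact stateTolA_of_cross hE (cross_run hE heq u) (cross_run hE heq u') hB
  · -- surjective
    intro y
    induction y using Quot.ind with | _ p =>
    obtain ⟨u, hu⟩ := hreachB p
    exact ⟨Quot.mk _ (A.run A.init u), by rw [beta_run hE hreachA heq u, hu]⟩
  · simpa [PDFA.run] using beta_run hE hreachA heq []
  · -- transitions
    refine ⟨fun x a => Quot.lift (fun q => Quot.mk _ (A.next q a))
        (fun q q' h => Quot.sound (fun w => h (a :: w))) x,
      fun x a => Quot.lift (fun p => Quot.mk _ (B.next p a))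
        (fun p p' h => Quot.sound (fun w => h (a :: w))) x,
      fun q a => rfl, fun p a => rfl, ?_⟩
    intro x a
    induction x using Quot.ind with | _ q =>
    obtain ⟨u, hu⟩ := hreachA q
    have h1 : A.next q a = A.run A.init (u ++ [a]) := by
      rw [PDFA.run_append_s10, hu]; rfl
    have h2 : B.next (B.run B.init u) a = B.run B.init (u ++ [a]) := by
      rw [PDFA.run_append_s10]; rfl
    show beta hE hreachA heq (Quot.mk _ (A.next q a)) = _
    rw [h1, beta_run hE hreachA heq (u ++ [a]), ← h2, ← hu,
      beta_run hE hreachA heq u]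
  · -- outputs
    refine ⟨Quot.lift (fun q => Quot.mk E (A.out q))
        (fun q q' h => Quot.sound (h [])),
      Quot.lift (fun p => Quot.mk E (B.out p))
        (fun p p' h => Quot.sound (h [])),
      fun q => rfl, fun p => rfl, ?_⟩
    intro x
    induction x using Quot.ind with | _ q =>
    obtain ⟨u, hu⟩ := hreachA q
    rw [← hu, beta_run hE hreachA heq u]
    exact Quot.sound (hE.symm (cross_run hE heq u []))
  · exact Nat.card_eq_of_bijective (beta hE hreachA heq) ⟨fun x y hxy => by
      induction x using Quot.ind with | _ q =>
      induction y using Quot.ind with | _ q' =>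
      obtain ⟨u, hu⟩ := hreachA q
      obtain ⟨u', hu'⟩ := hreachA q'
      rw [← hu, ← hu', beta_run hE hreachA heq u, beta_run hE hreachA heq u'] at hxy
      rw [Quot.eq] at hxy
      exact Quot.sound (hu ▸ hu' ▸ stateTolA_of_cross hE (cross_run hE heq u)
        (cross_run hE heq u') ((Equivalence.eqvGen_iff hBeq).mp hxy)),
      fun y => by
      induction y using Quot.ind with | _ p =>
      obtain ⟨u, hu⟩ := hreachB p
      exact ⟨Quot.mk _ (A.run A.init u), by rw [beta_run hE hreachA heq u, hu]⟩⟩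
end

section
/- For any PDFA A with all states reachable, every realization B of the quotient PDFA of A modulo E defines a language model pointwise E-equivalent to that of A: M_B(u) =_E M_A(u) for all u ∈ Σ*. -/
variable {Q α : Type*} [Fintype α]

/-- A quotient PDFA: like a PDFA but the output map assigns an `E`-equivalence
class of distributions to each state. -/
structure QPDFA (Q : Type*) (α : Type*) [Fintype α] (E : PDist α → PDist α → Prop) where
  init : Q
  next : Q → α → Q
  out : Q → Quot E

variable {E : PDist α → PDist α → Prop}

/-- Extension of the transition function of a quotient PDFA to strings. -/
def QPDFA.run (H : QPDFA Q α E) (q : Q) (u : List α) : Q := u.foldl H.next q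

/-- The class-valued output of a quotient PDFA on a string: `π̄*(u) = π̄(τ̄*(u))`. -/
def QPDFA.outStar (H : QPDFA Q α E) (u : List α) : Quot E := H.out (H.run H.init u)

/-- A PDFA `A` realizes a quotient PDFA `H` (on the same state space) if they
share initial state and transitions, and the output distribution of `A` at each
state lies in the class assigned by `H`. -/
def Realizes (A : PDFA Q α) (H : QPDFA Q α E) : Prop :=
  A.init = H.init ∧ A.next = H.next ∧ ∀ q, Quot.mk E (A.out q) = H.out q

/-- The quotient PDFA of a PDFA `A` modulo the state congruence `≡^A_E`. -/
def PDFA.quot (A : PDFA Q α) (E : PDist α → PDist α → Prop) :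
    QPDFA (Quot (stateTol A E)) α E where
  init := Quot.mk _ A.init
  next := fun x a =>
    Quot.lift (fun q => Quot.mk (stateTol A E) (A.next q a))
      (fun _ _ h => Quot.sound (fun w => h (a :: w))) x
  out := Quot.lift (fun q => Quot.mk E (A.out q)) (fun _ _ h => Quot.sound (h []))

namespace PDFA

variable (A : PDFA Q α) (E)

theorem quot_run_mk (q : Q) (u : List α) :
    (A.quot E).run (Quot.mk _ q) u = Quot.mk (stateTol A E) (A.run q u) := by
  induction u generalizing q with
  | nil => rfl
  | cons a u ih => exact ih (A.next q a)

theorem quot_outStar (u : List α) : (A.quot E).outStar u = Quot.mk E (A.lm u) := by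
  change (A.quot E).out ((A.quot E).run (Quot.mk _ A.init) u) = _
  rw [quot_run_mk]
  rfl

end PDFA

namespace Realizes

variable {A : PDFA Q α} {H : QPDFA Q α E}

theorem run_eq (hA : Realizes A H) (q : Q) (u : List α) : A.run q u = H.run q u := by
  rw [PDFA.run, QPDFA.run, hA.2.1]

theorem mk_lm (hA : Realizes A H) (u : List α) : Quot.mk E (A.lm u) = H.outStar u := by
  rw [PDFA.lm, QPDFA.outStar, hA.run_eq, hA.1, hA.2.2]

end Realizes

theorem realization_of_quotient_equiv_general {Q α : Type*} [Fintype α]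
    (A : PDFA Q α) (E : PDist α → PDist α → Prop) (hE : Equivalence E)
    (B : PDFA (Quot (stateTol A E)) α) (hB : Realizes B (A.quot E)) :
    ∀ u : List α, E (B.lm u) (A.lm u) := by
  intro u
  have hclass : Quot.mk E (B.lm u) = Quot.mk E (A.lm u) := by
    rw [hB.mk_lm, PDFA.quot_outStar]
  exact hE.eqvGen_iff.mp (Quot.eqvGen_exact hclass)

/-- Every realization of the quotient PDFA of `A` defines a language model
pointwise `E`-equivalent to that of `A`. -/
theorem realization_of_quotient_equiv {Q α : Type*} [Fintype α] [Fintype Q]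
    (A : PDFA Q α) (E : PDist α → PDist α → Prop) (hE : Equivalence E)
    (hreach : ∀ q : Q, ∃ u : List α, A.run A.init u = q)
    (B : PDFA (Quot (stateTol A E)) α) (hB : Realizes B (A.quot E)) :
    ∀ u : List α, E (B.lm u) (A.lm u) :=
  realization_of_quotient_equiv_general A E hE B hB
end

section
/- If a language model M admits a finite (S,M)-clique congruence, then M is PDFA S-recognizable: there exists a PDFA A such that M(u) ≈_S M_A(u) for all strings u. -/
variable {Q α : Type*} [Fintype α]

/-- An `(S, M)`-clique congruence: a partition of `Σ*` into cliques of the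
tolerance induced by `M` and `S`, compatible with appending symbols. -/
def IsCliqueCongruence {α : Type*} [Fintype α] (M : List α → PDist α)
    (S : PDist α → PDist α → Prop) (C : Set (Set (List α))) : Prop :=
  (∀ u : List α, ∃ c ∈ C, u ∈ c) ∧
  (∀ c ∈ C, ∀ c' ∈ C, c ≠ c' → Disjoint c c') ∧
  (∀ c ∈ C, ∀ u ∈ c, ∀ v ∈ c, strTol M S u v) ∧
  (∀ c ∈ C, ∀ u ∈ c, ∀ v ∈ c, ∀ a : α, ∃ c' ∈ C, u ++ [a] ∈ c' ∧ v ++ [a] ∈ c')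

/-- Prop. 29 (paper): if a language model admits a finite `(S,M)`-clique
congruence, then it is PDFA `S`-recognizable. -/
theorem clique_congruence_recognizable {α : Type} [Fintype α]
    (M : List α → PDist α) (S : PDist α → PDist α → Prop)
    (hrefl : ∀ d, S d d) (hsymm : ∀ d d', S d d' → S d' d)
    (C : Set (Set (List α))) (hC : IsCliqueCongruence M S C) (hfin : C.Finite) :
    ∃ (Q : Type) (_ : Fintype Q) (A : PDFA Q α), ∀ u, S (M u) (A.lm u) := by

  classical
  obtain ⟨hcov, hdisj, hclq, hcong⟩ := hC
  set D : Set (Set (List α)) := {c | c ∈ C ∧ c.Nonempty} with hD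
  have hDfin : D.Finite := hfin.subset (fun c hc => hc.1)
  haveI : Fintype ↥D := hDfin.fintype
  have hf : ∀ u : List α, ∃ q : ↥D, u ∈ q.1 := by
    intro u
    obtain ⟨c, hc, hu⟩ := hcov u
    exact ⟨⟨c, hc, ⟨u, hu⟩⟩, hu⟩
  let f : List α → ↥D := fun u => (hf u).choose
  have hfmem : ∀ u, u ∈ (f u).1 := fun u => (hf u).choose_spec
  have huniq : ∀ (u : List α) (q : ↥D), u ∈ q.1 → f u = q := by
    intro u q hu
    by_contra hne
    have hsets : (f u).1 ≠ q.1 := fun h => hne (Subtype.ext h)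
    have hd := hdisj _ (f u).2.1 _ q.2.1 hsets
    exact (Set.disjoint_left.mp hd (hfmem u)) hu
  let rep : ↥D → List α := fun q => q.2.2.choose
  have hrep : ∀ q : ↥D, rep q ∈ q.1 := fun q => q.2.2.choose_spec
  let A : PDFA ↥D α := ⟨f [], fun q => M (rep q), fun q a => f (rep q ++ [a])⟩
  have hrun : ∀ u : List α, A.run A.init u = f u := by
    intro u
    induction u using List.reverseRecOn with
    | nil => rfl
    | append_singleton u a ih =>
      have hstep : A.run A.init (u ++ [a]) = A.next (A.run A.init u) a := by
        simp [PDFA.run, List.foldl_append]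
      rw [hstep, ih]
      show f (rep (f u) ++ [a]) = f (u ++ [a])
      obtain ⟨c', hc', hu', hv'⟩ :=
        hcong (f u).1 (f u).2.1 u (hfmem u) (rep (f u)) (hrep (f u)) a
      have h1 : f (rep (f u) ++ [a]) = ⟨c', hc', ⟨_, hv'⟩⟩ := huniq _ _ hv'
      have h2 : f (u ++ [a]) = ⟨c', hc', ⟨_, hv'⟩⟩ := huniq _ _ hu'
      rw [h1, h2]
  refine ⟨↥D, inferInstance, A, fun u => ?_⟩
  have hlm : A.lm u = M (rep (f u)) := by
    simp [PDFA.lm, hrun u]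
    rfl
  rw [hlm]
  have := hclq (f u).1 (f u).2.1 u (hfmem u) (rep (f u)) (hrep (f u)) []
  simpa using this
end
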